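/- arXiv:1403.1302 — 7 statements merged into one kernel-verified Lean document; each statement's English description precedes it below -/
import Mathlib

section
/- Let θ ∈ (0,1). With E(Y^k) = ∫₀¹ y^k · θ/(1-(1-θ)y)² dy, the variance E(Y²) - (E(Y))² equals (θ³ - 2θ² - θ²(ln θ)² + θ)/(1-θ)⁴. (Variance of the SUG maximum distribution.) -/
/-- Variance of the SUG maximum distribution:
E(Y²) - (E(Y))² = (θ³ - 2θ² - θ²(ln θ)² + θ)/(1-θ)⁴,
where E(Y^k) = ∫₀¹ y^k · θ/(1-(1-θ)y)² dy. -/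
theorem sug_max_variance (θ : ℝ) (hθ : θ ∈ Set.Ioo (0:ℝ) 1) :
    (∫ y in (0:ℝ)..1, y ^ 2 * (θ / (1 - (1 - θ) * y) ^ 2)) -
      (∫ y in (0:ℝ)..1, y * (θ / (1 - (1 - θ) * y) ^ 2)) ^ 2 =
      (θ ^ 3 - 2 * θ ^ 2 - θ ^ 2 * Real.log θ ^ 2 + θ) / (1 - θ) ^ 4 := by
  obtain ⟨hθ0, hθ1⟩ := hθ
  set a : ℝ := 1 - θ with ha
  have ha0 : 0 < a := by simp [ha]; linarith
  have hane : a ≠ 0 := ne_of_gt ha0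
  have hθne : θ ≠ 0 := ne_of_gt hθ0
  have hpos : ∀ y ∈ Set.uIcc (0:ℝ) 1, 0 < 1 - a * y := by
    intro y hy
    rw [Set.uIcc_of_le (by norm_num)] at hy
    nlinarith [hy.1, hy.2]
  have key : ∀ y ∈ Set.uIcc (0:ℝ) 1,
      HasDerivAt (fun y : ℝ => 1 - a * y) (-a) y := by
    intro y _
    simpa using ((hasDerivAt_id y).const_mul a).const_sub 1
  -- first moment
  have h1 : (∫ y in (0:ℝ)..1, y * (θ / (1 - (1 - θ) * y) ^ 2)) =
      (θ / a ^ 2) * (θ⁻¹ + Real.log θ) - (θ / a ^ 2) * (1 + Real.log 1) := by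
    rw [show (fun y : ℝ => y * (θ / (1 - (1 - θ) * y) ^ 2)) = fun y => y * (θ / (1 - a * y) ^ 2) from rfl]
    have := intervalIntegral.integral_eq_sub_of_hasDerivAt
      (f := fun y : ℝ => (θ / a ^ 2) * ((1 - a * y)⁻¹ + Real.log (1 - a * y)))
      (f' := fun y : ℝ => y * (θ / (1 - a * y) ^ 2))
      (a := 0) (b := 1)
      (fun y hy => by
        have hne : 1 - a * y ≠ 0 := ne_of_gt (hpos y hy)
        have hd : HasDerivAt (fun y : ℝ => (1 - a * y)⁻¹ + Real.log (1 - a * y))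
            (-(-a) / (1 - a * y) ^ 2 + (-a) / (1 - a * y)) y :=
          ((key y hy).inv hne).add ((key y hy).log hne)
        have := hd.const_mul (θ / a ^ 2)
        convert this using 1
        · rfl
        have hy : a * y = 1 - (1 - a * y) := by ring
        generalize 1 - a * y = u at hne hy ⊢
        field_simp
        linear_combination hy)
      (by
        apply ContinuousOn.intervalIntegrable
        apply ContinuousOn.mul continuousOn_id
        apply ContinuousOn.div continuousOn_const
        · fun_prop
        · intro y hy; exact pow_ne_zero _ (ne_of_gt (hpos y hy)))
    rw [this]
    norm_num [ha]
  -- second moment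
  have h2 : (∫ y in (0:ℝ)..1, y ^ 2 * (θ / (1 - (1 - θ) * y) ^ 2)) =
      (θ / a ^ 2) * (θ⁻¹ / a + 2 / a * Real.log θ + 1) -
      (θ / a ^ 2) * (1 / a + 2 / a * Real.log 1 + 0) := by
    have := intervalIntegral.integral_eq_sub_of_hasDerivAt
      (f := fun y : ℝ => (θ / a ^ 2) * ((1 - a * y)⁻¹ / a + 2 / a * Real.log (1 - a * y) + y))
      (f' := fun y : ℝ => y ^ 2 * (θ / (1 - a * y) ^ 2))
      (a := 0) (b := 1)
      (fun y hy => by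
        have hne : 1 - a * y ≠ 0 := ne_of_gt (hpos y hy)
        have hd : HasDerivAt
            (fun y : ℝ => (1 - a * y)⁻¹ / a + 2 / a * Real.log (1 - a * y) + y)
            ((-(-a) / (1 - a * y) ^ 2) / a + 2 / a * ((-a) / (1 - a * y)) + 1) y :=
          ((((key y hy).inv hne).div_const a).add (((key y hy).log hne).const_mul (2 / a))).add
            (hasDerivAt_id y)
        have := hd.const_mul (θ / a ^ 2)
        convert this using 1
        · rfl
        have hy : a * y = 1 - (1 - a * y) := by ring
        generalize 1 - a * y = u at hne hy ⊢
        field_simp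
        linear_combination (a * y + 1 - u) * hy)
      (by
        apply ContinuousOn.intervalIntegrable
        apply ContinuousOn.mul (by fun_prop)
        apply ContinuousOn.div continuousOn_const
        · fun_prop
        · intro y hy; exact pow_ne_zero _ (ne_of_gt (hpos y hy)))
    rw [this]
    norm_num [ha]
  rw [h1, h2]
  have h1a : (1:ℝ) - θ ≠ 0 := by rw [← ha]; exact hane
  simp only [Real.log_one, ha]
  field_simp
  ring
end

section
/- Let θ ∈ (0,1). With E(Z^k) = ∫₀¹ z^k · θ/(θ+(1-θ)z)² dz, the variance E(Z²) - (E(Z))² equals (θ³ - 2θ² - θ²(ln θ)² + θ)/(1-θ)⁴. (Variance of the SUG minimum distribution; it coincides with the variance of the SUG maximum distribution.) -/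
/-- Variance of the SUG minimum distribution:
E(Z²) - (E(Z))² = (θ³ - 2θ² - θ²(ln θ)² + θ)/(1-θ)⁴,
where E(Z^k) = ∫₀¹ z^k · θ/(θ+(1-θ)z)² dz. -/
theorem sug_min_variance (θ : ℝ) (hθ : θ ∈ Set.Ioo (0:ℝ) 1) :
    (∫ z in (0:ℝ)..1, z ^ 2 * (θ / (θ + (1 - θ) * z) ^ 2)) -
      (∫ z in (0:ℝ)..1, z * (θ / (θ + (1 - θ) * z) ^ 2)) ^ 2 =
      (θ ^ 3 - 2 * θ ^ 2 - θ ^ 2 * Real.log θ ^ 2 + θ) / (1 - θ) ^ 4 := by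
  obtain ⟨hθ0, hθ1⟩ := hθ
  have ha0 : 0 < 1 - θ := by linarith
  have ha : (1 - θ) ≠ 0 := ne_of_gt ha0
  have hθne : θ ≠ 0 := ne_of_gt hθ0
  have hpos : ∀ z ∈ Set.uIcc (0:ℝ) 1, 0 < θ + (1 - θ) * z := by
    intro z hz
    rw [Set.uIcc_of_le (by norm_num)] at hz
    nlinarith [hz.1, hz.2]
  have hcont : ContinuousOn (fun z : ℝ => θ + (1 - θ) * z) (Set.uIcc 0 1) := by
    fun_prop
  have hlinD : ∀ z : ℝ, HasDerivAt (fun z : ℝ => θ + (1 - θ) * z) (1 - θ) z := by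
    intro z
    have h := ((hasDerivAt_id' z).const_mul (1 - θ)).const_add θ
    rwa [mul_one] at h
  have I1 : (∫ z in (0:ℝ)..1, z * (θ / (θ + (1 - θ) * z) ^ 2)) =
      (-θ * Real.log θ - θ * (1 - θ)) / (1 - θ) ^ 2 := by
    have key := intervalIntegral.integral_eq_sub_of_hasDerivAt
      (f := fun z => θ / (1 - θ) ^ 2 * Real.log (θ + (1 - θ) * z)
        + θ ^ 2 / (1 - θ) ^ 2 * (θ + (1 - θ) * z)⁻¹)
      (f' := fun z => z * (θ / (θ + (1 - θ) * z) ^ 2)) (a := 0) (b := 1) ?_ ?_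
    · rw [key]
      have : θ + (1 - θ) * 1 = 1 := by ring
      rw [this]
      have h0 : θ + (1 - θ) * 0 = θ := by ring
      rw [h0, Real.log_one]
      field_simp
      ring
    · intro z hz
      have hp := hpos z hz
      have hne : θ + (1 - θ) * z ≠ 0 := ne_of_gt hp
      have d1 : HasDerivAt (fun z : ℝ => Real.log (θ + (1 - θ) * z))
          ((1 - θ) / (θ + (1 - θ) * z)) z := by
        simpa [div_eq_mul_inv, mul_comm] using (hlinD z).log hne
      have d2 : HasDerivAt (fun z : ℝ => (θ + (1 - θ) * z)⁻¹)
          (-(1 - θ) / (θ + (1 - θ) * z) ^ 2) z := by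
        exact (hlinD z).inv hne
      have := (d1.const_mul (θ / (1 - θ) ^ 2)).add (d2.const_mul (θ ^ 2 / (1 - θ) ^ 2))
      convert this using 1
      · rfl
      field_simp
      ring
    · apply ContinuousOn.intervalIntegrable
      apply ContinuousOn.mul continuousOn_id
      apply ContinuousOn.div continuousOn_const
      · exact hcont.pow 2
      · intro z hz
        exact pow_ne_zero 2 (ne_of_gt (hpos z hz))
  have I2 : (∫ z in (0:ℝ)..1, z ^ 2 * (θ / (θ + (1 - θ) * z) ^ 2)) =
      θ * (1 - θ ^ 2 + 2 * θ * Real.log θ) / (1 - θ) ^ 3 := by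
    have key := intervalIntegral.integral_eq_sub_of_hasDerivAt
      (f := fun z => θ / (1 - θ) ^ 2 * z
        - 2 * θ ^ 2 / (1 - θ) ^ 3 * Real.log (θ + (1 - θ) * z)
        - θ ^ 3 / (1 - θ) ^ 3 * (θ + (1 - θ) * z)⁻¹)
      (f' := fun z => z ^ 2 * (θ / (θ + (1 - θ) * z) ^ 2)) (a := 0) (b := 1) ?_ ?_
    · rw [key]
      have : θ + (1 - θ) * 1 = 1 := by ring
      rw [this]
      have h0 : θ + (1 - θ) * 0 = θ := by ring
      rw [h0, Real.log_one]
      field_simp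
      ring
    · intro z hz
      have hp := hpos z hz
      have hne : θ + (1 - θ) * z ≠ 0 := ne_of_gt hp
      have d1 : HasDerivAt (fun z : ℝ => Real.log (θ + (1 - θ) * z))
          ((1 - θ) / (θ + (1 - θ) * z)) z := by
        simpa [div_eq_mul_inv, mul_comm] using (hlinD z).log hne
      have d2 : HasDerivAt (fun z : ℝ => (θ + (1 - θ) * z)⁻¹)
          (-(1 - θ) / (θ + (1 - θ) * z) ^ 2) z := by
        exact (hlinD z).inv hne
      have d0 : HasDerivAt (fun z : ℝ => θ / (1 - θ) ^ 2 * z) (θ / (1 - θ) ^ 2) z := by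
        simpa using (hasDerivAt_id z).const_mul (θ / (1 - θ) ^ 2)
      have := (d0.sub (d1.const_mul (2 * θ ^ 2 / (1 - θ) ^ 3))).sub
        (d2.const_mul (θ ^ 3 / (1 - θ) ^ 3))
      convert this using 1
      · rfl
      have e : z = ((θ + (1 - θ) * z) - θ) / (1 - θ) := by field_simp; ring
      generalize θ + (1 - θ) * z = D at hne e ⊢
      subst e
      field_simp
      ring
    · apply ContinuousOn.intervalIntegrable
      apply ContinuousOn.mul (continuousOn_id.pow 2)
      apply ContinuousOn.div continuousOn_const
      · exact hcont.pow 2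
      · intro z hz
        exact pow_ne_zero 2 (ne_of_gt (hpos z hz))
  rw [I1, I2]
  field_simp
  ring
end

section
/- For θ ∈ (0,1) and z ∈ [θ, 1], the series Σ_{n=2}^∞ θ(1-θ)^{n-2} · ((n-1)/(1-θ)) · ((1-z)/(1-θ))^{n-2} converges and equals θ/((1-θ)z²). (Density of the CSUG minimum distribution.) -/
/-- Density of the CSUG minimum distribution: for θ ∈ (0,1) and z ∈ [θ,1],
Σ_{n=2}^∞ θ(1-θ)^{n-2} · ((n-1)/(1-θ)) · ((1-z)/(1-θ))^{n-2} = θ/((1-θ)z²).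
We reindex the sum by n = m + 2, m ∈ ℕ. -/
theorem csug_min_density (θ z : ℝ) (hθ : θ ∈ Set.Ioo (0:ℝ) 1)
    (hz : z ∈ Set.Icc θ 1) :
    HasSum (fun m : ℕ => θ * (1 - θ) ^ m * (((m : ℝ) + 1) / (1 - θ)) * ((1 - z) / (1 - θ)) ^ m)
      (θ / ((1 - θ) * z ^ 2)) := by
  obtain ⟨hθ0, hθ1⟩ := hθ
  obtain ⟨hzθ, hz1⟩ := hz
  have hz0 : 0 < z := lt_of_lt_of_le hθ0 hzθ
  have hθne : (1 - θ) ≠ 0 := by linarith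
  have hr : ‖(1 - z)‖ < 1 := by
    rw [Real.norm_eq_abs, abs_lt]; constructor <;> linarith
  have h1 : HasSum (fun m : ℕ => (m : ℝ) * (1 - z) ^ m) ((1 - z) / (1 - (1 - z)) ^ 2) :=
    hasSum_coe_mul_geometric_of_norm_lt_one hr
  have h2 : HasSum (fun m : ℕ => (1 - z) ^ m) (1 / (1 - (1 - z))) := by
    simpa using hasSum_geometric_of_norm_lt_one hr
  have h3 := (h1.add h2).mul_left (θ / (1 - θ))
  have key : (θ / (1 - θ)) * ((1 - z) / (1 - (1 - z)) ^ 2 + 1 / (1 - (1 - z)))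
      = θ / ((1 - θ) * z ^ 2) := by
    have hzz : (1 : ℝ) - (1 - z) = z := by ring
    rw [hzz]
    field_simp
    ring
  rw [key] at h3
  convert h3 using 2 with m
  case e'_3 => rfl
  have hpow : (1 - θ) ^ m ≠ 0 := pow_ne_zero _ hθne
  rw [div_pow]
  field_simp
end

section
/- Let θ ∈ (0,1). With E(Y^k) = ∫₀^{1-θ} y^k · θ/((1-θ)(1-y)²) dy, the variance E(Y²) - (E(Y))² equals (θ³ - 2θ² - θ²(ln θ)² + θ)/(1-θ)². (Variance of the CSUG maximum distribution.) -/
open Real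

/-- Variance of the CSUG maximum distribution:
E(Y²) - (E(Y))² = (θ³ - 2θ² - θ²(ln θ)² + θ)/(1-θ)²,
where E(Y^k) = ∫₀^{1-θ} y^k · θ/((1-θ)(1-y)²) dy. -/
theorem csug_max_variance (θ : ℝ) (hθ : θ ∈ Set.Ioo (0:ℝ) 1) :
    (∫ y in (0:ℝ)..(1 - θ), y ^ 2 * (θ / ((1 - θ) * (1 - y) ^ 2))) -
      (∫ y in (0:ℝ)..(1 - θ), y * (θ / ((1 - θ) * (1 - y) ^ 2))) ^ 2 =
      (θ ^ 3 - 2 * θ ^ 2 - θ ^ 2 * Real.log θ ^ 2 + θ) / (1 - θ) ^ 2 := by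
  obtain ⟨h0, h1⟩ := hθ
  have hθne : θ ≠ 0 := ne_of_gt h0
  have h1θ : (0:ℝ) < 1 - θ := by linarith
  have h1θne : (1:ℝ) - θ ≠ 0 := ne_of_gt h1θ
  have huIcc : Set.uIcc (0:ℝ) (1-θ) = Set.Icc 0 (1-θ) := Set.uIcc_of_le (le_of_lt h1θ)
  have key : ∀ y ∈ Set.uIcc (0:ℝ) (1-θ), 0 < 1 - y := by
    intro y hy
    rw [huIcc] at hy
    obtain ⟨_, hy2⟩ := hy
    linarith
  have hsub : HasDerivAt (fun y : ℝ => 1 - y) (-1) (0:ℝ) → True := fun _ => trivial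
  -- continuity pieces
  have hcden : ∀ y ∈ Set.uIcc (0:ℝ) (1-θ), (1-θ) * (1-y)^2 ≠ 0 := by
    intro y hy
    have := key y hy
    positivity
  have hc1 : ContinuousOn (fun y : ℝ => y * (θ / ((1 - θ) * (1 - y) ^ 2)))
      (Set.uIcc (0:ℝ) (1-θ)) := by
    apply ContinuousOn.mul continuousOn_id
    exact ContinuousOn.div continuousOn_const
      (continuousOn_const.mul (((continuous_const.sub continuous_id).pow 2).continuousOn)) hcden
  have hc2 : ContinuousOn (fun y : ℝ => y ^ 2 * (θ / ((1 - θ) * (1 - y) ^ 2)))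
      (Set.uIcc (0:ℝ) (1-θ)) := by
    apply ContinuousOn.mul (continuousOn_id.pow 2)
    exact ContinuousOn.div continuousOn_const
      (continuousOn_const.mul (((continuous_const.sub continuous_id).pow 2).continuousOn)) hcden
  have I1 : (∫ y in (0:ℝ)..(1 - θ), y * (θ / ((1 - θ) * (1 - y) ^ 2)))
      = θ/(1-θ) * (1/θ - 1 + Real.log θ) := by
    have hd : ∀ y ∈ Set.uIcc (0:ℝ) (1-θ),
        HasDerivAt (fun y : ℝ => θ/(1-θ) * (1/(1-y) + Real.log (1-y)))
          (y * (θ / ((1-θ)*(1-y)^2))) y := by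
      intro y hy
      have hpos := key y hy
      have hne : (1:ℝ) - y ≠ 0 := ne_of_gt hpos
      have h1' : HasDerivAt (fun y : ℝ => 1 - y) (-1) y := by
        simpa using (hasDerivAt_id' y).const_sub (1:ℝ)
      have h2 : HasDerivAt (fun y : ℝ => 1/(1-y)) (1/(1-y)^2) y := by
        have := h1'.div (hasDerivAt_const y (1:ℝ)) one_ne_zero
        have h3 := (h1'.inv hne)
        have : HasDerivAt (fun y : ℝ => (1 - y)⁻¹) (1/(1-y)^2) y := by
          exact h3.congr_deriv (by ring)
        simpa [one_div] using this
      have h3 : HasDerivAt (fun y : ℝ => Real.log (1-y)) (-(1/(1-y))) y := by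
        have := (Real.hasDerivAt_log hne).comp y h1'
        exact this.congr_deriv (by ring)
      have h4 := (h2.add h3).const_mul (θ/(1-θ))
      exact h4.congr_deriv (by field_simp; ring)
    rw [intervalIntegral.integral_eq_sub_of_hasDerivAt hd hc1.intervalIntegrable]
    have e1 : (1:ℝ) - (1 - θ) = θ := by ring
    rw [e1]
    simp [Real.log_one]
    ring
  have I2 : (∫ y in (0:ℝ)..(1 - θ), y ^ 2 * (θ / ((1 - θ) * (1 - y) ^ 2)))
      = θ/(1-θ) * (1/θ + 2 * Real.log θ - θ) := by
    have hd : ∀ y ∈ Set.uIcc (0:ℝ) (1-θ),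
        HasDerivAt (fun y : ℝ => θ/(1-θ) * (1/(1-y) + 2 * Real.log (1-y) + y))
          (y ^ 2 * (θ / ((1-θ)*(1-y)^2))) y := by
      intro y hy
      have hpos := key y hy
      have hne : (1:ℝ) - y ≠ 0 := ne_of_gt hpos
      have h1' : HasDerivAt (fun y : ℝ => 1 - y) (-1) y := by
        simpa using (hasDerivAt_id' y).const_sub (1:ℝ)
      have h2 : HasDerivAt (fun y : ℝ => 1/(1-y)) (1/(1-y)^2) y := by
        have h3 := (h1'.inv hne)
        have : HasDerivAt (fun y : ℝ => (1 - y)⁻¹) (1/(1-y)^2) y := by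
          exact h3.congr_deriv (by ring)
        simpa [one_div] using this
      have h3 : HasDerivAt (fun y : ℝ => Real.log (1-y)) (-(1/(1-y))) y := by
        have := (Real.hasDerivAt_log hne).comp y h1'
        exact this.congr_deriv (by ring)
      have h4 := ((h2.add (h3.const_mul 2)).add (hasDerivAt_id y)).const_mul (θ/(1-θ))
      exact h4.congr_deriv (by field_simp; ring)
    rw [intervalIntegral.integral_eq_sub_of_hasDerivAt hd hc2.intervalIntegrable]
    have e1 : (1:ℝ) - (1 - θ) = θ := by ring
    rw [e1]
    simp [Real.log_one]
    ring
  rw [I1, I2]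
  field_simp
  ring
end

section
/- Let θ ∈ (0,1). With E(Z^k) = ∫_θ^1 z^k · θ/((1-θ)z²) dz, the variance E(Z²) - (E(Z))² equals (θ³ - 2θ² - θ²(ln θ)² + θ)/(1-θ)². (Variance of the CSUG minimum distribution; it coincides with the variance of the CSUG maximum distribution.) -/
/-- Variance of the CSUG minimum distribution:
E(Z²) - (E(Z))² = (θ³ - 2θ² - θ²(ln θ)² + θ)/(1-θ)²,
where E(Z^k) = ∫_θ^1 z^k · θ/((1-θ)z²) dz. -/
theorem csug_min_variance (θ : ℝ) (hθ : θ ∈ Set.Ioo (0:ℝ) 1) :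
    (∫ z in θ..1, z ^ 2 * (θ / ((1 - θ) * z ^ 2))) -
      (∫ z in θ..1, z * (θ / ((1 - θ) * z ^ 2))) ^ 2 =
      (θ ^ 3 - 2 * θ ^ 2 - θ ^ 2 * Real.log θ ^ 2 + θ) / (1 - θ) ^ 2 := by
  obtain ⟨h0, h1⟩ := hθ
  have hne : (1 : ℝ) - θ ≠ 0 := by linarith
  have hle : θ ≤ 1 := le_of_lt h1
  have hz : ∀ z ∈ Set.uIcc θ 1, z ≠ 0 := by
    intro z hz
    rw [Set.uIcc_of_le hle] at hz
    exact ne_of_gt (lt_of_lt_of_le h0 hz.1)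
  have h2 : (∫ z in θ..1, z ^ 2 * (θ / ((1 - θ) * z ^ 2))) = θ := by
    rw [intervalIntegral.integral_congr (g := fun _ => θ / (1 - θ))
      (by intro z hzz; have := hz z hzz; field_simp)]
    rw [intervalIntegral.integral_const]
    rw [smul_eq_mul]
    field_simp
  have h1' : (∫ z in θ..1, z * (θ / ((1 - θ) * z ^ 2))) =
      (θ / (1 - θ)) * (- Real.log θ) := by
    rw [intervalIntegral.integral_congr (g := fun z => (θ / (1 - θ)) * z⁻¹)
      (by intro z hzz; have := hz z hzz; field_simp)]
    rw [intervalIntegral.integral_const_mul, integral_inv_of_pos h0 one_pos,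
      Real.log_div one_ne_zero (ne_of_gt h0), Real.log_one]
    ring
  rw [h2, h1']
  field_simp
  ring
end

section
/- Fix n ≥ 1 and observations y₁, …, yₙ ∈ (0,1). Define the likelihood ℓ : (0,1) → ℝ by ℓ(θ) = (θ/(1-θ))ⁿ · ∏_{i=1}^n 1/(1-yᵢ)² if θ ≤ 1 - yᵢ for all i, and ℓ(θ) = 0 otherwise. Then ℓ attains its maximum over (0,1) at θ̂ = 1 - max(y₁, …, yₙ); i.e., ℓ(θ) ≤ ℓ(1 - max(y₁,…,yₙ)) for all θ ∈ (0,1). (The MLE of θ for the CSUG maximum distribution is 1 minus the sample maximum.) -/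
open scoped Classical

/-- MLE for the CSUG maximum distribution: the likelihood
ℓ(θ) = (θ/(1-θ))ⁿ ∏ᵢ 1/(1-yᵢ)² (when θ ≤ 1-yᵢ for all i, else 0)
is maximized over (0,1) at θ̂ = 1 - max(y₁,…,yₙ). -/
theorem csug_max_mle (n : ℕ) (hn : 1 ≤ n) (y : Fin n → ℝ)
    (hy : ∀ i, y i ∈ Set.Ioo (0:ℝ) 1)
    (ℓ : ℝ → ℝ)
    (hℓ : ∀ θ, ℓ θ =
      if ∀ i, θ ≤ 1 - y i then (θ / (1 - θ)) ^ n * ∏ i, 1 / (1 - y i) ^ 2 else 0)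
    (θ : ℝ) (hθ : θ ∈ Set.Ioo (0:ℝ) 1) :
    ℓ θ ≤ ℓ (1 - Finset.univ.sup' (Finset.univ_nonempty_iff.mpr ⟨⟨0, hn⟩⟩) y) := by
  set M := Finset.univ.sup' (Finset.univ_nonempty_iff.mpr ⟨⟨0, hn⟩⟩) y with hM
  have hMle : ∀ i, y i ≤ M := fun i => Finset.le_sup' y (Finset.mem_univ i)
  obtain ⟨i₀, -, hMeq⟩ := Finset.exists_mem_eq_sup' (Finset.univ_nonempty_iff.mpr ⟨⟨0, hn⟩⟩) y
  rw [← hM] at hMeq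
  have hM0 : 0 < M := by rw [hMeq]; exact (hy i₀).1
  have hM1 : M < 1 := by rw [hMeq]; exact (hy i₀).2
  have hPnn : (0:ℝ) ≤ ∏ i, 1 / (1 - y i) ^ 2 :=
    Finset.prod_nonneg fun i _ => by positivity
  have hcond : ∀ i, 1 - M ≤ 1 - y i := fun i => by linarith [hMle i]
  rw [hℓ θ, hℓ (1 - M), if_pos hcond]
  split_ifs with h
  · apply mul_le_mul_of_nonneg_right _ hPnn
    have hθM : θ ≤ 1 - M := by
      have := h i₀; linarith [hMeq ▸ this]
    apply pow_le_pow_left₀ (div_nonneg hθ.1.le (by linarith [hθ.2]))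
    rw [div_le_div_iff₀ (by linarith [hθ.2]) (by linarith)]
    nlinarith [hθ.1]
  · exact mul_nonneg (pow_nonneg (div_nonneg (by linarith) (by linarith)) n) hPnn
end

section
/- Fix n ≥ 1 and observations z₁, …, zₙ ∈ (0,1). Define the likelihood ℓ : (0,1) → ℝ by ℓ(θ) = (θ/(1-θ))ⁿ · ∏_{i=1}^n 1/zᵢ² if θ ≤ zᵢ for all i, and ℓ(θ) = 0 otherwise. Then ℓ attains its maximum over (0,1) at θ̂ = min(z₁, …, zₙ); i.e., ℓ(θ) ≤ ℓ(min(z₁,…,zₙ)) for all θ ∈ (0,1). (The MLE of θ for the CSUG minimum distribution is the sample minimum.) -/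
open scoped Classical

/-- MLE for the CSUG minimum distribution: the likelihood
ℓ(θ) = (θ/(1-θ))ⁿ ∏ᵢ 1/zᵢ² (when θ ≤ zᵢ for all i, else 0)
is maximized over (0,1) at θ̂ = min(z₁,…,zₙ). -/
theorem csug_min_mle (n : ℕ) (hn : 1 ≤ n) (z : Fin n → ℝ)
    (hz : ∀ i, z i ∈ Set.Ioo (0:ℝ) 1)
    (ℓ : ℝ → ℝ)
    (hℓ : ∀ θ, ℓ θ =
      if ∀ i, θ ≤ z i then (θ / (1 - θ)) ^ n * ∏ i, 1 / (z i) ^ 2 else 0)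
    (θ : ℝ) (hθ : θ ∈ Set.Ioo (0:ℝ) 1) :
    ℓ θ ≤ ℓ (Finset.univ.inf' (Finset.univ_nonempty_iff.mpr ⟨⟨0, hn⟩⟩) z) := by
  set ne : (Finset.univ : Finset (Fin n)).Nonempty :=
    Finset.univ_nonempty_iff.mpr ⟨⟨0, hn⟩⟩
  set m := Finset.univ.inf' ne z with hm
  obtain ⟨j, -, hj⟩ := Finset.exists_mem_eq_inf' ne z
  have hm0 : 0 < m := by rw [hm, hj]; exact (hz j).1
  have hm1 : m < 1 := by rw [hm, hj]; exact (hz j).2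
  have hmle : ∀ i, m ≤ z i := fun i => Finset.inf'_le _ (Finset.mem_univ i)
  have hprod : 0 ≤ ∏ i, 1 / (z i) ^ 2 :=
    Finset.prod_nonneg fun i _ => by positivity
  have hℓm : ℓ m = (m / (1 - m)) ^ n * ∏ i, 1 / (z i) ^ 2 := by
    rw [hℓ]; exact if_pos hmle
  rw [hℓ θ, hℓm]
  by_cases h : ∀ i, θ ≤ z i
  · rw [if_pos h]
    have hθm : θ ≤ m := Finset.le_inf' _ _ fun i _ => h i
    have hdiv : θ / (1 - θ) ≤ m / (1 - m) :=
      div_le_div₀ (le_of_lt hm0) hθm (by linarith) (by linarith)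
    exact mul_le_mul_of_nonneg_right
      (pow_le_pow_left₀ (div_nonneg hθ.1.le (by linarith [hθ.2])) hdiv n) hprod
  · rw [if_neg h]
    have h1 : 0 ≤ (m / (1 - m)) ^ n := pow_nonneg (div_nonneg hm0.le (by linarith)) n
    exact mul_nonneg h1 hprod
end
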